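/- Let p ≥ 1 and k ≥ 1 be integers with gcd(k,p) = 1. If cos(πk/p) is a rational number, then p ≤ 3. -/

import Mathlib

open Real

theorem Rat.den_natCast_div_natCast_of_coprime {k p : ℕ} (hp : p ≠ 0) (hkp : k.Coprime p) :
    ((k : ℚ) / p).den = p := by
  have := Rat.den_div_eq_of_coprime (a := k) (b := p) (by omega) hkp
  push_cast at this
  exact_mod_cast this

theorem stmt_6 (p k : ℕ) (hkp : Nat.Coprime k p)
    (h : ∃ m : ℚ, Real.cos (π * k / p) = (m : ℝ)) : p ≤ 3 := by
  by_contra! hp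
  have hden : ((k : ℚ) / p).den = p := Rat.den_natCast_div_natCast_of_coprime (by omega) hkp
  obtain ⟨m, hm⟩ := h
  refine irrational_cos_rat_mul_pi (hden ▸ hp) ⟨m, ?_⟩
  rw [← hm]
  push_cast
  ring_nf
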